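/- Let Q ∈ ℝ^{n×n} be a generator matrix (off-diagonal entries nonnegative, rows summing to 0), Θ ∈ ℝ^{m×m} a generator, A ∈ ℝ^{m×n} arbitrary, π₀ a probability distribution on {1,…,m}, p₀ a probability distribution on {1,…,n}. Then for all t ≥ 0, ‖π₀ᵀe^{Θt}A − p₀ᵀe^{Qt}‖₁ ≤ ‖π₀ᵀA − p₀ᵀ‖₁ + t·‖ΘA − AQ‖_∞. -/

import Mathlib

open Matrix BigOperators

noncomputable def l1 {n : ℕ} (v : Fin n → ℝ) : ℝ := ∑ i, |v i|

noncomputable def ninf {m n : ℕ} (A : Matrix (Fin m) (Fin n) ℝ) : ℝ :=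
  ⨆ i, ∑ j, |A i j|

def IsStochastic {m n : ℕ} (A : Matrix (Fin m) (Fin n) ℝ) : Prop :=
  (∀ i j, 0 ≤ A i j) ∧ ∀ i, ∑ j, A i j = 1

def IsGenerator {n : ℕ} (Q : Matrix (Fin n) (Fin n) ℝ) : Prop :=
  (∀ i j, i ≠ j → 0 ≤ Q i j) ∧ ∀ i, ∑ j, Q i j = 0

/-!
Write `E_Θ(t) = e^{tΘ}` and `E_Q(t) = e^{tQ}`. Generators have stochastic exponentials (shift
`Q` by a multiple of the identity to make it entrywise nonnegative; the row sums are fixed because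
`Q 𝟙 = 0`), and stochastic matrices have `‖·‖_∞ ≤ 1`. Then
`π₀ᵀE_Θ(t)A − p₀ᵀE_Q(t) = π₀ᵀ(E_Θ(t)A − AE_Q(t)) + (π₀ᵀA − p₀ᵀ)E_Q(t)`, and the first bracket is
the increment of `s ↦ E_Θ(s) A E_Q(t − s)` over `[0, t]`, whose derivative
`E_Θ(s)(ΘA − AQ)E_Q(t − s)` has norm at most `‖ΘA − AQ‖_∞`.
-/

open NormedSpace

theorem l1_add_le {n : ℕ} (x y : Fin n → ℝ) : l1 (x + y) ≤ l1 x + l1 y := by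
  rw [l1, l1, l1, ← Finset.sum_add_distrib]
  exact Finset.sum_le_sum fun i _ => abs_add_le (x i) (y i)

theorem l1_nonneg {n : ℕ} (x : Fin n → ℝ) : 0 ≤ l1 x :=
  Finset.sum_nonneg fun i _ => abs_nonneg (x i)

theorem l1_eq_sum_of_nonneg {n : ℕ} {x : Fin n → ℝ} (hx : ∀ i, 0 ≤ x i) : l1 x = ∑ i, x i :=
  Finset.sum_congr rfl fun i _ => abs_of_nonneg (hx i)

section LinftyOpNorm

attribute [local instance] Matrix.linftyOpNormedAddCommGroup Matrix.linftyOpNormedSpace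
  Matrix.linftyOpNormedRing Matrix.linftyOpNormedAlgebra

variable {ι κ μ : Type*} [Fintype ι] [Fintype κ] [Fintype μ]

theorem HasDerivAt.matrix_mul {u : ℝ → Matrix ι κ ℝ} {v : ℝ → Matrix κ μ ℝ} {u' : Matrix ι κ ℝ}
    {v' : Matrix κ μ ℝ} {x : ℝ} (hu : HasDerivAt u u' x) (hv : HasDerivAt v v' x) :
    HasDerivAt (fun s => u s * v s) (u' * v x + u x * v') x := by
  rw [add_comm]
  exact (mulLinearMap ℝ).toContinuousBilinearMap.hasDerivAt_of_bilinear (fun _ => hu) (fun _ => hv)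

variable [DecidableEq ι] [DecidableEq κ]

namespace Matrix

theorem exp_apply_nonneg {X : Matrix ι ι ℝ} (hX : ∀ i j, 0 ≤ X i j) (i j : ι) :
    0 ≤ exp X i j :=
  (Pi.hasSum.1 (Pi.hasSum.1 (exp_series_hasSum_exp' (𝕂 := ℝ) X) i) j).nonneg fun k =>
    mul_nonneg (by positivity) (pow_apply_nonneg hX k i j)

theorem exp_smul_one (c : ℝ) : exp (c • (1 : Matrix ι ι ℝ)) = Real.exp c • 1 := by
  rw [← Algebra.algebraMap_eq_smul_one, ← Algebra.algebraMap_eq_smul_one, Real.exp_eq_exp_ℝ]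
  exact (algebraMap_exp_comm c).symm

theorem exp_apply_nonneg_of_offDiag_nonneg {X : Matrix ι ι ℝ}
    (hX : ∀ i j, i ≠ j → 0 ≤ X i j) (i j : ι) : 0 ≤ exp X i j := by
  set c := ∑ l, |X l l|
  have hshift : ∀ i j, 0 ≤ (X + c • 1) i j := fun i j => by
    rcases eq_or_ne i j with rfl | hij
    · have : |X i i| ≤ c := Finset.single_le_sum (fun l _ => abs_nonneg (X l l)) (Finset.mem_univ i)
      simp only [add_apply, smul_apply, one_apply_eq, smul_eq_mul, mul_one]
      linarith [neg_abs_le (X i i)]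
    · simpa [hij] using hX i j hij
  have hexp : exp X = Real.exp (-c) • exp (X + c • 1) := by
    have hcomm : Commute (X + c • 1) ((-c) • 1) := (Commute.one_right _).smul_right _
    rw [← mul_smul_one, ← exp_smul_one, ← exp_add_of_commute _ _ hcomm]
    congr 1
    module
  rw [hexp, smul_apply, smul_eq_mul]
  exact mul_nonneg (Real.exp_nonneg _) (exp_apply_nonneg hshift i j)

theorem exp_mulVec_of_mulVec_eq_zero {X : Matrix ι ι ℝ} {v : ι → ℝ} (hX : X *ᵥ v = 0) :
    exp X *ᵥ v = v := by
  have hterm : ∀ k, k ≠ 0 → ((k.factorial : ℝ)⁻¹ • X ^ k) *ᵥ v = 0 := fun k hk => by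
    obtain ⟨k, rfl⟩ := Nat.exists_eq_succ_of_ne_zero hk
    rw [smul_mulVec, pow_succ, ← mulVec_mulVec, hX, mulVec_zero, smul_zero]
  have hsum : HasSum (fun k => ((k.factorial : ℝ)⁻¹ • X ^ k) *ᵥ v) (exp X *ᵥ v) :=
    (exp_series_hasSum_exp' X).mapL ((mulVecBilin ℝ ℝ).flip v).toContinuousLinearMap
  have hsingle := hasSum_single 0 hterm
  rw [show ((Nat.factorial 0 : ℝ)⁻¹ • X ^ 0) *ᵥ v = v by simp] at hsingle
  exact hsum.unique hsingle

theorem linfty_opNorm_le_one_of_mem_rowStochastic {M : Matrix ι ι ℝ}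
    (hM : M ∈ rowStochastic ℝ ι) : ‖M‖ ≤ 1 := by
  rw [linfty_opNorm_def, NNReal.coe_le_one]
  refine Finset.sup_le fun i _ => le_of_eq ?_
  rw [← NNReal.coe_eq_one, NNReal.coe_sum, ← sum_row_of_mem_rowStochastic hM i]
  exact Finset.sum_congr rfl fun j _ => by simp [abs_of_nonneg (hM.1 i j)]

theorem hasDerivAt_exp_smul_mul_mul_exp_sub_smul (Θ : Matrix ι ι ℝ) (A : Matrix ι κ ℝ)
    (Q : Matrix κ κ ℝ) (t s : ℝ) :
    HasDerivAt (fun s => exp (s • Θ) * A * exp ((t - s) • Q))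
      (exp (s • Θ) * (Θ * A - A * Q) * exp ((t - s) • Q)) s := by
  have hΘ := (hasDerivAt_exp_smul_const (𝕂 := ℝ) Θ s).matrix_mul (hasDerivAt_const s A)
  have hQ : HasDerivAt (fun s => exp ((t - s) • Q)) (-(Q * exp ((t - s) • Q))) s := by
    have := (hasDerivAt_exp_smul_const' (𝕂 := ℝ) Q (t - s)).scomp s
      ((hasDerivAt_id s).const_sub t)
    rw [neg_one_smul] at this
    exact this
  refine (hΘ.matrix_mul hQ).congr_deriv ?_
  simp only [Matrix.mul_zero, add_zero, sub_eq_add_neg, Matrix.mul_add, Matrix.add_mul,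
    Matrix.mul_neg, Matrix.neg_mul, Matrix.mul_assoc]
  -- the two sides differ only in which (defeq) matrix instances they use
  rfl

theorem norm_exp_smul_mul_sub_mul_exp_smul_le {Θ : Matrix ι ι ℝ} {Q : Matrix κ κ ℝ}
    (A : Matrix ι κ ℝ) (hΘ : ∀ s : ℝ, 0 ≤ s → ‖exp (s • Θ)‖ ≤ 1)
    (hQ : ∀ s : ℝ, 0 ≤ s → ‖exp (s • Q)‖ ≤ 1) {t : ℝ} (ht : 0 ≤ t) :
    ‖exp (t • Θ) * A - A * exp (t • Q)‖ ≤ t * ‖Θ * A - A * Q‖ := by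
  have hbound : ∀ s ∈ Set.Ico 0 t,
      ‖exp (s • Θ) * (Θ * A - A * Q) * exp ((t - s) • Q)‖ ≤ ‖Θ * A - A * Q‖ := by
    rintro s ⟨hs, hst⟩
    calc _ ≤ ‖exp (s • Θ)‖ * ‖Θ * A - A * Q‖ * ‖exp ((t - s) • Q)‖ :=
          (linfty_opNorm_mul _ _).trans (by gcongr; exact linfty_opNorm_mul _ _)
      _ ≤ 1 * ‖Θ * A - A * Q‖ * 1 := by
          gcongr
          exacts [hΘ s hs, hQ _ (sub_nonneg.2 hst.le)]
      _ = ‖Θ * A - A * Q‖ := by ring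
  have := norm_image_sub_le_of_norm_deriv_le_segment'
    (fun s _ => (hasDerivAt_exp_smul_mul_mul_exp_sub_smul Θ A Q t s).hasDerivWithinAt) hbound t
    (Set.right_mem_Icc.2 ht)
  simpa [mul_comm] using this

end Matrix

variable {m n : ℕ}

theorem IsGenerator.exp_smul_mem_rowStochastic {Q : Matrix (Fin n) (Fin n) ℝ} (hQ : IsGenerator Q)
    {t : ℝ} (ht : 0 ≤ t) : exp (t • Q) ∈ rowStochastic ℝ (Fin n) := by
  have hQ1 : Q *ᵥ 1 = 0 := funext fun i => by simpa [mulVec, dotProduct] using hQ.2 i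
  refine mem_rowStochastic.2 ⟨exp_apply_nonneg_of_offDiag_nonneg fun i j hij =>
    mul_nonneg ht (hQ.1 i j hij), exp_mulVec_of_mulVec_eq_zero ?_⟩
  rw [smul_mulVec, hQ1, smul_zero]

theorem ninf_eq_linfty_opNorm (A : Matrix (Fin m) (Fin n) ℝ) : ninf A = ‖A‖ := by
  simp [ninf, linfty_opNorm_def, Finset.sup_univ_eq_ciSup, NNReal.coe_iSup]

theorem l1_eq_linfty_opNorm_replicateRow (v : Fin n → ℝ) : l1 v = ‖replicateRow (Fin 1) v‖ :=
  (linfty_opNorm_replicateRow v).symm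

theorem l1_vecMul_le (x : Fin m → ℝ) (M : Matrix (Fin m) (Fin n) ℝ) :
    l1 (x ᵥ* M) ≤ l1 x * ninf M := by
  rw [l1_eq_linfty_opNorm_replicateRow, l1_eq_linfty_opNorm_replicateRow, ninf_eq_linfty_opNorm,
    replicateRow_vecMul]
  exact linfty_opNorm_mul _ _

theorem IsGenerator.ninf_exp_smul_le_one {Q : Matrix (Fin n) (Fin n) ℝ} (hQ : IsGenerator Q)
    {t : ℝ} (ht : 0 ≤ t) : ninf (exp (t • Q)) ≤ 1 := by
  rw [ninf_eq_linfty_opNorm]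
  exact linfty_opNorm_le_one_of_mem_rowStochastic (hQ.exp_smul_mem_rowStochastic ht)

theorem IsGenerator.ninf_exp_smul_mul_sub_mul_exp_smul_le {Θ : Matrix (Fin m) (Fin m) ℝ}
    {Q : Matrix (Fin n) (Fin n) ℝ} (hΘ : IsGenerator Θ) (hQ : IsGenerator Q)
    (A : Matrix (Fin m) (Fin n) ℝ) {t : ℝ} (ht : 0 ≤ t) :
    ninf (exp (t • Θ) * A - A * exp (t • Q)) ≤ t * ninf (Θ * A - A * Q) := by
  simp only [ninf_eq_linfty_opNorm]
  exact norm_exp_smul_mul_sub_mul_exp_smul_le A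
    (fun s hs => linfty_opNorm_le_one_of_mem_rowStochastic (hΘ.exp_smul_mem_rowStochastic hs))
    (fun s hs => linfty_opNorm_le_one_of_mem_rowStochastic (hQ.exp_smul_mem_rowStochastic hs)) ht

end LinftyOpNorm

theorem stmt_6_general {m n : ℕ} (Q : Matrix (Fin n) (Fin n) ℝ) (hQ : IsGenerator Q)
    (Θ : Matrix (Fin m) (Fin m) ℝ) (hΘ : IsGenerator Θ)
    (A : Matrix (Fin m) (Fin n) ℝ)
    (π₀ : Fin m → ℝ) (hπ₀ : (∀ χ, 0 ≤ π₀ χ) ∧ ∑ χ, π₀ χ = 1)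
    (p₀ : Fin n → ℝ)
    (t : ℝ) (ht : 0 ≤ t) :
    l1 (Matrix.vecMul π₀ (NormedSpace.exp (t • Θ) * A) -
          Matrix.vecMul p₀ (NormedSpace.exp (t • Q))) ≤
      l1 (Matrix.vecMul π₀ A - p₀) + t * ninf (Θ * A - A * Q) := by
  have hπ₀_l1 : l1 π₀ = 1 := (l1_eq_sum_of_nonneg hπ₀.1).trans hπ₀.2
  have hsplit : π₀ ᵥ* (exp (t • Θ) * A) - p₀ ᵥ* exp (t • Q) =
      π₀ ᵥ* (exp (t • Θ) * A - A * exp (t • Q)) + (π₀ ᵥ* A - p₀) ᵥ* exp (t • Q) := by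
    rw [vecMul_sub, sub_vecMul, vecMul_vecMul]
    abel
  calc _ ≤ l1 π₀ * ninf (exp (t • Θ) * A - A * exp (t • Q))
          + l1 (π₀ ᵥ* A - p₀) * ninf (exp (t • Q)) := by
        rw [hsplit]
        exact (l1_add_le _ _).trans (add_le_add (l1_vecMul_le _ _) (l1_vecMul_le _ _))
    _ ≤ 1 * (t * ninf (Θ * A - A * Q)) + l1 (π₀ ᵥ* A - p₀) * 1 := by
        rw [hπ₀_l1]
        gcongr
        exacts [hΘ.ninf_exp_smul_mul_sub_mul_exp_smul_le hQ A ht, l1_nonneg _,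
          hQ.ninf_exp_smul_le_one ht]
    _ = _ := by ring

theorem stmt_6 {m n : ℕ} (Q : Matrix (Fin n) (Fin n) ℝ) (hQ : IsGenerator Q)
    (Θ : Matrix (Fin m) (Fin m) ℝ) (hΘ : IsGenerator Θ)
    (A : Matrix (Fin m) (Fin n) ℝ)
    (π₀ : Fin m → ℝ) (hπ₀ : (∀ χ, 0 ≤ π₀ χ) ∧ ∑ χ, π₀ χ = 1)
    (p₀ : Fin n → ℝ) (hp₀ : (∀ i, 0 ≤ p₀ i) ∧ ∑ i, p₀ i = 1)
    (t : ℝ) (ht : 0 ≤ t) :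
    l1 (Matrix.vecMul π₀ (NormedSpace.exp (t • Θ) * A) -
          Matrix.vecMul p₀ (NormedSpace.exp (t • Q))) ≤
      l1 (Matrix.vecMul π₀ A - p₀) + t * ninf (Θ * A - A * Q) :=
  stmt_6_general Q hQ Θ hΘ A π₀ hπ₀ p₀ t ht
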